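/- arXiv:1303.0975 — 2 statements merged into one kernel-verified Lean document; each statement's English description precedes it below -/
import Mathlib

section
/- Let b, σ ∈ ℝ and define the differential operator 𝓛 by (𝓛f)(x) = b·x·f'(x) + (σ²/2)·f''(x). Then for all m, n ∈ ℕ the L²(ℝ) inner product of h_m with 𝓛h_n is given by: ∫_ℝ h_m(x)(𝓛h_n)(x) dx = −b/2 − σ²(2n+1)/8 if m = n; = (−b/2 + σ²/8)·√((n+1)(n+2)) if m = n+2; = (b/2 + σ²/8)·√(n(n−1)) if m = n−2 (with n ≥ 2); and = 0 in all other cases. -/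
open MeasureTheory Real Filter

noncomputable def hermiteP (n : ℕ) (x : ℝ) : ℝ :=
  Polynomial.aeval x (Polynomial.hermite n)

noncomputable def gaussDensity (x : ℝ) : ℝ :=
  (2 * Real.pi) ^ (-(1:ℝ)/2) * Real.exp (-x ^ 2 / 2)

noncomputable def hermiteB (n : ℕ) (x : ℝ) : ℝ :=
  (2 * Real.pi) ^ (-(1:ℝ)/4) * Real.exp (-x ^ 2 / 4) * hermiteP n x / Real.sqrt (Nat.factorial n)

/-- The generator of the linear diffusion dX = bX dt + σ dV. -/
noncomputable def genL (b σ : ℝ) (f : ℝ → ℝ) (x : ℝ) : ℝ :=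
  b * x * deriv f x + σ ^ 2 / 2 * deriv (deriv f) x

/-!
Write `h_n = (2π)^{-1/4} e^{-x²/4} He_n / √n!`. Conjugating `𝓛` by the weight `e^{-x²/4}`
gives a second-order operator on polynomials which, by the recurrences
`x He_n = He_{n+1} + He_n'` and `He_{n+1}' = (n+1) He_n`, sends `He_n` to a combination of
`He_{n+2}`, `He_n` and `He_n''`. Hence `h_m · 𝓛h_n` is a polynomial times the standard Gaussian
density, and Gaussian integration by parts (Stein's identity `E[p'(Z)] = E[Z p(Z)]`) yields both
`E[He_m He_n''] = E[He_{m+2} He_n]` and the orthogonality `E[He_m He_n] = n! δ_{mn}`.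
-/

open Polynomial
open scoped Nat

namespace Polynomial

theorem derivative_hermite_succ (n : ℕ) :
    derivative (hermite (n + 1)) = (n + 1 : ℤ[X]) * hermite n := by
  induction n with
  | zero => simp
  | succ k ih =>
    rw [hermite_succ (k + 1), derivative_sub, derivative_mul, derivative_X, ih, hermite_succ k]
    simp only [derivative_mul, derivative_add, derivative_natCast, derivative_one]
    push_cast
    ring

theorem X_mul_derivative_hermite (n : ℕ) :
    X * derivative (hermite n) =
      (n : ℤ[X]) * hermite n + derivative (derivative (hermite n)) := by
  have h := congrArg derivative (hermite_succ n)
  rw [derivative_hermite_succ, derivative_sub, derivative_mul, derivative_X] at h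
  linear_combination -h

end Polynomial

local notation "He" n:max => Polynomial.map (algebraMap ℤ ℝ) (hermite n)

theorem integrable_eval_mul_exp_neg_mul_sq {b : ℝ} (hb : 0 < b) (p : ℝ[X]) :
    Integrable fun x => p.eval x * exp (-b * x ^ 2) := by
  induction p using Polynomial.induction_on' with
  | add p q hp hq =>
    simp only [eval_add, add_mul]
    exact hp.add hq
  | monomial n a =>
    have h := (integrable_rpow_mul_exp_neg_mul_sq hb (s := n)
      (by linarith [n.cast_nonneg (α := ℝ)])).const_mul a
    simpa only [eval_monomial, rpow_natCast, mul_assoc] using h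

theorem gaussDensity_eq_rpow_mul_exp (x : ℝ) :
    gaussDensity x = (2 * π) ^ (-(1:ℝ)/2) * exp (-(1/2) * x ^ 2) := by
  rw [gaussDensity]; ring_nf

theorem integrable_eval_mul_gaussDensity (p : ℝ[X]) :
    Integrable fun x => p.eval x * gaussDensity x := by
  simpa only [gaussDensity_eq_rpow_mul_exp, mul_left_comm] using
    (integrable_eval_mul_exp_neg_mul_sq (by norm_num : (0:ℝ) < 1/2) p).const_mul
      ((2 * π) ^ (-(1:ℝ)/2))

theorem integral_gaussDensity : ∫ x, gaussDensity x = 1 := by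
  simp only [gaussDensity_eq_rpow_mul_exp, integral_const_mul, integral_gaussian]
  rw [show π / (1 / 2) = 2 * π by ring, sqrt_eq_rpow, ← rpow_add (by positivity)]
  norm_num

theorem hasDerivAt_exp_neg_sq_div (a x : ℝ) :
    HasDerivAt (fun y => exp (-y ^ 2 / a)) (exp (-x ^ 2 / a) * (-2 * x / a)) x := by
  refine (((hasDerivAt_pow 2 x).fun_neg.div_const a).exp).congr_deriv ?_
  push_cast
  ring

theorem hasDerivAt_gaussDensity (x : ℝ) : HasDerivAt gaussDensity (-x * gaussDensity x) x :=
  ((hasDerivAt_exp_neg_sq_div 2 x).const_mul _).congr_deriv (by rw [gaussDensity]; ring)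

noncomputable def gaussExpectation : ℝ[X] →ₗ[ℝ] ℝ where
  toFun p := ∫ x, p.eval x * gaussDensity x
  map_add' p q := by
    simp only [eval_add, add_mul]
    exact integral_add (integrable_eval_mul_gaussDensity p)
      (integrable_eval_mul_gaussDensity q)
  map_smul' c p := by
    simp only [eval_smul, smul_eq_mul, mul_assoc, RingHom.id_apply]
    exact integral_const_mul c _

theorem gaussExpectation_apply (p : ℝ[X]) :
    gaussExpectation p = ∫ x, p.eval x * gaussDensity x := rfl

theorem gaussExpectation_derivative (p : ℝ[X]) :
    gaussExpectation (derivative p) = gaussExpectation (X * p) := by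
  have hderiv (x : ℝ) : HasDerivAt (fun y => p.eval y * gaussDensity y)
      ((derivative p - X * p).eval x * gaussDensity x) x := by
    refine ((p.hasDerivAt x).mul (hasDerivAt_gaussDensity x)).congr_deriv ?_
    simp only [eval_sub, eval_mul, eval_X]; ring
  have h := integral_eq_zero_of_hasDerivAt_of_integrable hderiv
    (integrable_eval_mul_gaussDensity _) (integrable_eval_mul_gaussDensity p)
  rw [← gaussExpectation_apply, map_sub] at h
  exact sub_eq_zero.mp h

theorem map_hermite_succ (n : ℕ) : (He (n + 1)) = X * (He n) - derivative (He n) := by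
  simp [hermite_succ, derivative_map]

theorem derivative_map_hermite_succ (n : ℕ) :
    derivative (He (n + 1)) = (n + 1 : ℝ[X]) * (He n) := by
  rw [derivative_map, derivative_hermite_succ]
  simp

theorem gaussExpectation_hermite_mul_derivative (m : ℕ) (q : ℝ[X]) :
    gaussExpectation ((He m) * derivative q) = gaussExpectation ((He (m + 1)) * q) := by
  have h := gaussExpectation_derivative ((He m) * q)
  rw [derivative_mul, map_add] at h
  rw [map_hermite_succ, sub_mul, map_sub, mul_assoc, ← h]
  ring

theorem gaussExpectation_hermite_mul_hermite (m n : ℕ) :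
    gaussExpectation ((He m) * (He n)) = if m = n then (m ! : ℝ) else 0 := by
  induction m generalizing n with
  | zero =>
    cases n with
    | zero => simp [gaussExpectation_apply, integral_gaussDensity]
    | succ k =>
      rw [mul_comm, ← gaussExpectation_hermite_mul_derivative]
      simp
  | succ m ih =>
    rw [← gaussExpectation_hermite_mul_derivative]
    cases n with
    | zero => simp
    | succ k =>
      rw [derivative_map_hermite_succ, mul_left_comm,
        show ((k : ℝ[X]) + 1) = C ((k : ℝ) + 1) by simp, C_mul', map_smul, ih, smul_eq_mul]
      by_cases h : m = k
      · subst h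
        simp [Nat.factorial_succ]
      · simp [h]

theorem deriv_exp_mul_eval (p : ℝ[X]) :
    deriv (fun y => exp (-y ^ 2 / 4) * p.eval y) =
      fun y => exp (-y ^ 2 / 4) * (derivative p - C (1 / 2) * X * p).eval y := by
  funext x
  refine ((hasDerivAt_exp_neg_sq_div 4 x).mul (p.hasDerivAt x)).deriv.trans ?_
  simp only [eval_sub, eval_mul, eval_C, eval_X]
  ring

/-- `e^{x²/4} 𝓛 (e^{-x²/4} p)`: the generator conjugated by the Hermite weight. -/
noncomputable def conjGenL (b σ : ℝ) (p : ℝ[X]) (x : ℝ) : ℝ :=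
  b * x * ((derivative p).eval x - x / 2 * p.eval x) +
    σ ^ 2 / 2 * ((derivative (derivative p)).eval x - x * (derivative p).eval x +
      (x ^ 2 / 4 - 1 / 2) * p.eval x)

theorem genL_exp_mul_eval (b σ : ℝ) (p : ℝ[X]) (x : ℝ) :
    genL b σ (fun y => exp (-y ^ 2 / 4) * p.eval y) x = exp (-x ^ 2 / 4) * conjGenL b σ p x := by
  rw [genL, deriv_exp_mul_eval, deriv_exp_mul_eval, conjGenL]
  simp only [derivative_sub, derivative_mul, derivative_C, derivative_X,
    eval_sub, eval_add, eval_mul, eval_C, eval_X, eval_zero, eval_one]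
  ring

theorem genL_const_mul (b σ c : ℝ) (f : ℝ → ℝ) (x : ℝ) :
    genL b σ (fun y => c * f y) x = c * genL b σ f x := by
  simp only [genL, deriv_const_mul_field']
  ring

theorem conjGenL_hermite (b σ : ℝ) (n : ℕ) (x : ℝ) :
    conjGenL b σ (He n) x =
      (-b / 2 + σ ^ 2 / 8) * (He (n + 2)).eval x +
        (-b / 2 - σ ^ 2 * (2 * n + 1) / 8) * (He n).eval x +
        (b / 2 + σ ^ 2 / 8) * (derivative (derivative (He n))).eval x := by
  rw [conjGenL]
  have e₁ := congrArg (eval x) (map_hermite_succ n)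
  have e₂ := congrArg (eval x) (map_hermite_succ (n + 1))
  rw [show n + 1 + 1 = n + 2 from rfl] at e₂
  have e₃ := congrArg (fun p => eval x (p.map (algebraMap ℤ ℝ))) (X_mul_derivative_hermite n)
  simp only [derivative_map_hermite_succ, eval_sub, eval_mul, eval_add, eval_X, eval_natCast,
    eval_one] at e₁ e₂
  simp only [Polynomial.map_mul, Polynomial.map_add, map_X, Polynomial.map_natCast,
    ← derivative_map, eval_mul, eval_add, eval_X, eval_natCast] at e₃
  linear_combination (b / 2 - σ ^ 2 / 8) * x * e₁ + (b / 2 - σ ^ 2 / 8) * e₂ +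
    (b / 2 - 3 * σ ^ 2 / 8) * e₃

theorem hermiteB_eq (n : ℕ) :
    hermiteB n = fun y =>
      (2 * π) ^ (-(1:ℝ)/4) / √(n ! : ℝ) * (exp (-y ^ 2 / 4) * (He n).eval y) := by
  funext y
  rw [hermiteB, hermiteP, eval_map_algebraMap]
  ring

theorem hermiteB_mul_genL_hermiteB (b σ : ℝ) (m n : ℕ) (x : ℝ) :
    hermiteB m x * genL b σ (hermiteB n) x =
      ((He m) * (C (-b / 2 + σ ^ 2 / 8) * (He (n + 2)) +
        C (-b / 2 - σ ^ 2 * (2 * n + 1) / 8) * (He n) +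
        C (b / 2 + σ ^ 2 / 8) * derivative (derivative (He n)))).eval x * gaussDensity x /
        (√(m ! : ℝ) * √(n ! : ℝ)) := by
  have hc : (2 * π) ^ (-(1:ℝ)/4) * (2 * π) ^ (-(1:ℝ)/4) = (2 * π) ^ (-(1:ℝ)/2) := by
    rw [← rpow_add (by positivity)]
    norm_num
  have he : exp (-x ^ 2 / 4) * exp (-x ^ 2 / 4) = exp (-x ^ 2 / 2) := by
    rw [← exp_add]
    ring_nf
  rw [hermiteB_eq, hermiteB_eq, genL_const_mul, genL_exp_mul_eval, conjGenL_hermite,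
    gaussDensity, ← hc, ← he]
  simp only [eval_mul, eval_add, eval_C]
  ring

theorem integral_hermiteB_mul_genL_hermiteB (b σ : ℝ) (m n : ℕ) :
    ∫ x, hermiteB m x * genL b σ (hermiteB n) x =
      ((-b / 2 + σ ^ 2 / 8) * gaussExpectation ((He m) * (He (n + 2))) +
        (-b / 2 - σ ^ 2 * (2 * n + 1) / 8) * gaussExpectation ((He m) * (He n)) +
        (b / 2 + σ ^ 2 / 8) * gaussExpectation ((He (m + 2)) * (He n))) /
        (√(m ! : ℝ) * √(n ! : ℝ)) := by
  simp_rw [hermiteB_mul_genL_hermiteB]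
  rw [integral_div, ← gaussExpectation_apply]
  simp only [C_mul', mul_add (He m), mul_smul_comm, LinearMap.map_add, LinearMap.map_smul,
    smul_eq_mul, gaussExpectation_hermite_mul_derivative]

theorem factorial_add_two_div_sqrt_mul_sqrt (n : ℕ) :
    ((n + 2)! : ℝ) / (√((n + 2)! : ℝ) * √(n ! : ℝ)) = √((n + 1) * (n + 2)) := by
  have hf : ((n + 2)! : ℝ) = (n + 1) * (n + 2) * n ! := by
    push_cast [Nat.factorial_succ]
    ring
  have ha := mul_self_sqrt (by positivity : (0:ℝ) ≤ (n + 1) * (n + 2))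
  have hb := mul_self_sqrt (by positivity : (0:ℝ) ≤ n !)
  rw [hf, sqrt_mul (by positivity), div_eq_iff (by positivity)]
  linear_combination (-(√(n ! : ℝ) * √(n ! : ℝ))) * ha - ((n + 1) * (n + 2) : ℝ) * hb

/-- Entries of the matrix A of the Galerkin approximation w.r.t. the Hermite basis
(0-based indexing). -/
theorem galerkin_matrix_A (b σ : ℝ) (m n : ℕ) :
    (m = n →
      (∫ x : ℝ, hermiteB m x * genL b σ (hermiteB n) x) =
        -b / 2 - σ ^ 2 * (2 * (n : ℝ) + 1) / 8) ∧
    (m = n + 2 →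
      (∫ x : ℝ, hermiteB m x * genL b σ (hermiteB n) x) =
        (-b / 2 + σ ^ 2 / 8) * Real.sqrt (((n : ℝ) + 1) * ((n : ℝ) + 2))) ∧
    (m + 2 = n →
      (∫ x : ℝ, hermiteB m x * genL b σ (hermiteB n) x) =
        (b / 2 + σ ^ 2 / 8) * Real.sqrt ((n : ℝ) * ((n : ℝ) - 1))) ∧
    (m ≠ n → m ≠ n + 2 → m + 2 ≠ n →
      (∫ x : ℝ, hermiteB m x * genL b σ (hermiteB n) x) = 0) := by
  simp only [integral_hermiteB_mul_genL_hermiteB, gaussExpectation_hermite_mul_hermite]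
  refine ⟨?_, ?_, ?_, ?_⟩
  · rintro rfl
    rw [if_neg (by omega), if_pos rfl, if_neg (by omega)]
    simp only [mul_zero, zero_add, add_zero]
    rw [mul_self_sqrt (by positivity), mul_div_cancel_right₀ _ (by positivity)]
  · rintro rfl
    rw [if_pos rfl, if_neg (by omega), if_neg (by omega)]
    simp only [mul_zero, add_zero]
    rw [mul_div_assoc, factorial_add_two_div_sqrt_mul_sqrt]
  · rintro rfl
    rw [if_neg (by omega), if_neg (by omega), if_pos rfl]
    simp only [mul_zero, zero_add]
    rw [mul_comm √(m ! : ℝ), mul_div_assoc, factorial_add_two_div_sqrt_mul_sqrt]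
    push_cast
    ring_nf
  · intro h₁ h₂ h₃
    rw [if_neg h₂, if_neg h₁, if_neg h₃]
    simp
end

section
/- Let X be a real Banach space, let L : X → X be a continuous linear operator, and let γ ≥ 0 be such that the operator norms satisfy ‖L^n‖ ≤ γ^n / √(n!) for all n ∈ ℕ. Then the series ∑_{n=0}^{∞} L^n converges in operator norm to a continuous linear operator M with ‖M‖ ≤ (2/√3) · e^{2γ²}, M is a two-sided inverse of (I − L) (where I is the identity), and for every ξ⁰ ∈ X the element ξ = M ξ⁰ is the unique solution in X of the equation ξ = ξ⁰ + L ξ. -/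
/-!
Writing `γ ^ n / √n! = ((2γ) ^ n / √n!) · 2⁻ⁿ`, the Cauchy–Schwarz inequality bounds
`∑ γ ^ n / √n!` by `√(∑ (4γ²) ^ n / n!) · √(∑ 4⁻ⁿ) = e^{2γ²} · 2/√3`. Hence `∑ Lⁿ` converges
absolutely in operator norm, and a convergent geometric series `∑ Lⁿ` always inverts `1 - L`.
-/

open Real Nat

theorem ContinuousLinearMap.eq_add_apply_iff {R X : Type*} [Ring R] [TopologicalSpace X]
    [AddCommGroup X] [Module R X] [IsTopologicalAddGroup X] {L M : X →L[R] X}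
    (hl : M * (1 - L) = 1) (hr : (1 - L) * M = 1) (ξ0 ξ : X) : ξ = ξ0 + L ξ ↔ ξ = M ξ0 :=
  calc ξ = ξ0 + L ξ ↔ (1 - L) ξ = ξ0 := sub_eq_iff_eq_add.symm
    _ ↔ ξ = M ξ0 :=
      ⟨fun h => by rw [← h]; exact (DFunLike.congr_fun hl ξ).symm,
        fun h => by rw [h]; exact DFunLike.congr_fun hr ξ0⟩

theorem Real.hasSum_pow_div_factorial (x : ℝ) : HasSum (fun n : ℕ => x ^ n / n !) (exp x) := by
  rw [exp_eq_exp_ℝ]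
  exact NormedSpace.expSeries_div_hasSum_exp x

theorem pow_div_sqrt_factorial_eq_mul_half_pow (x : ℝ) (n : ℕ) :
    x ^ n / √(n ! : ℝ) = (2 * x) ^ n / √(n ! : ℝ) * (1 / 2) ^ n := by
  rw [mul_pow, div_mul_eq_mul_div, mul_right_comm, ← mul_pow]
  norm_num

theorem exists_hasSum_pow_div_sqrt_factorial_le {x : ℝ} (hx : 0 ≤ x) :
    ∃ C, HasSum (fun n : ℕ => x ^ n / √(n ! : ℝ)) C ∧ C ≤ exp (2 * x ^ 2) * (2 / √3) := by
  have hf : HasSum (fun n : ℕ => ((2 * x) ^ n / √(n ! : ℝ)) ^ (2 : ℝ))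
      (exp (2 * x ^ 2) ^ (2 : ℝ)) := by
    have hsq (n : ℕ) : ((2 * x) ^ n / √(n ! : ℝ)) ^ (2 : ℝ) = (4 * x ^ 2) ^ n / n ! := by
      rw [rpow_two, div_pow, sq_sqrt (cast_nonneg _), ← pow_mul, mul_comm n, pow_mul]
      ring
    rw [funext hsq, rpow_two, ← exp_nat_mul]
    convert hasSum_pow_div_factorial _ using 2
    push_cast
    ring
  have hg : HasSum (fun n : ℕ => ((1 / 2 : ℝ) ^ n) ^ (2 : ℝ)) ((2 / √3) ^ (2 : ℝ)) := by
    have hsq (n : ℕ) : ((1 / 2 : ℝ) ^ n) ^ (2 : ℝ) = (1 / 4) ^ n := by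
      rw [rpow_two, ← pow_mul, mul_comm n, pow_mul]
      norm_num
    rw [funext hsq, rpow_two, div_pow, sq_sqrt (by norm_num)]
    convert hasSum_geometric_of_lt_one (r := 1 / 4) (by norm_num) (by norm_num) using 1
    norm_num
  obtain ⟨C, -, hC, hsum⟩ := inner_le_Lp_mul_Lq_hasSum_of_nonneg Real.HolderConjugate.two_two
    (exp_pos _).le (by positivity) (fun n => by positivity) (fun n => by positivity) hf hg
  exact ⟨C, by simpa only [← pow_div_sqrt_factorial_eq_mul_half_pow] using hsum, hC⟩

theorem neumann_series_solution_general {X : Type*} [NormedAddCommGroup X] [NormedSpace ℝ X]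
    [CompleteSpace X] (L : X →L[ℝ] X) (γ : ℝ)
    (hL : ∀ n : ℕ, ‖L ^ n‖ ≤ γ ^ n / Real.sqrt (Nat.factorial n)) :
    ∃ M : X →L[ℝ] X,
      HasSum (fun n : ℕ => L ^ n) M ∧
      ‖M‖ ≤ 2 / Real.sqrt 3 * Real.exp (2 * γ ^ 2) ∧
      M * (1 - L) = 1 ∧ (1 - L) * M = 1 ∧
      ∀ ξ0 : X, M ξ0 = ξ0 + L (M ξ0) ∧ ∀ ξ : X, ξ = ξ0 + L ξ → ξ = M ξ0 := by
  obtain ⟨C, hC, hC_le⟩ := exists_hasSum_pow_div_sqrt_factorial_le (abs_nonneg γ)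
  have hbound (n : ℕ) : ‖L ^ n‖ ≤ |γ| ^ n / √(n ! : ℝ) :=
    (hL n).trans <| div_le_div_of_nonneg_right ((le_abs_self _).trans (abs_pow γ n).le)
      (sqrt_nonneg _)
  have hsum : Summable (L ^ ·) := hC.summable.of_norm_bounded hbound
  have hl := hsum.tsum_pow_mul_one_sub
  have hr := hsum.one_sub_mul_tsum_pow
  refine ⟨∑' n, L ^ n, hsum.hasSum, ?_, hl, hr, fun ξ0 => ⟨?_, fun ξ => ?_⟩⟩
  · calc ‖∑' n, L ^ n‖ ≤ C := hsum.hasSum.norm_le_of_bounded hC hbound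
      _ ≤ 2 / √3 * exp (2 * γ ^ 2) := by rwa [sq_abs, mul_comm] at hC_le
  · exact (ContinuousLinearMap.eq_add_apply_iff hl hr ξ0 _).2 rfl
  · exact (ContinuousLinearMap.eq_add_apply_iff hl hr ξ0 ξ).1

/-- Neumann-series inverse of I − L for a quasinilpotent operator with
‖L^n‖ ≤ γ^n/√(n!): the series ∑ L^n converges in operator norm to M, with
‖M‖ ≤ (2/√3)e^{2γ²}, M is a two-sided inverse of I − L, and for each ξ⁰ the
element M ξ⁰ is the unique solution of ξ = ξ⁰ + L ξ. -/
theorem neumann_series_solution {X : Type*} [NormedAddCommGroup X] [NormedSpace ℝ X]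
    [CompleteSpace X] (L : X →L[ℝ] X) (γ : ℝ) (hγ : 0 ≤ γ)
    (hL : ∀ n : ℕ, ‖L ^ n‖ ≤ γ ^ n / Real.sqrt (Nat.factorial n)) :
    ∃ M : X →L[ℝ] X,
      HasSum (fun n : ℕ => L ^ n) M ∧
      ‖M‖ ≤ 2 / Real.sqrt 3 * Real.exp (2 * γ ^ 2) ∧
      M * (1 - L) = 1 ∧ (1 - L) * M = 1 ∧
      ∀ ξ0 : X, M ξ0 = ξ0 + L (M ξ0) ∧ ∀ ξ : X, ξ = ξ0 + L ξ → ξ = M ξ0 :=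
  neumann_series_solution_general L γ hL
end
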